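/- arXiv:2202.06116 — 2 statements merged into one kernel-verified Lean document; each statement's English description precedes it below -/
import Mathlib

section
/- (Uniqueness part of Theorem 2.1.) Under the assumptions that φ_i (i = 1,2,γ) are bounded above and below by positive constants and K satisfies the uniform ellipticity/boundedness conditions (i)–(ii), if (p, u) and (p̃, ũ) in H¹(0,T; M) × L²(0,T; Σ) are two solutions of the weak reduced fracture problem a(u,v) − b(v,p) = 0 ∀v ∈ Σ, c_φ(∂_t p, μ) + b(u, μ) = L_q(μ) ∀μ ∈ M, with the same source q ∈ L²(0,T; M) and the same initial data p₀ ∈ H¹_*, then p = p̃ and u = ũ. -/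
/-- Uniqueness part of Theorem 2.1 for the weak reduced fracture problem
`a(u,v) − b(v,p) = 0 ∀v ∈ Σ`, `c_φ(∂_t p, μ) + b(u, μ) = L_q(μ) ∀μ ∈ M`,
stated abstractly: `a` is coercive (from the uniform ellipticity/boundedness of
`K`), `c_φ` is symmetric, coercive and bounded (from `0 < φ₋ ≤ φ ≤ φ₊`).
Two solutions with the same source `L_q` and the same initial data coincide. -/
theorem stmt7 {M S : Type*}
    [NormedAddCommGroup M] [InnerProductSpace ℝ M]
    [NormedAddCommGroup S] [InnerProductSpace ℝ S]
    (a : S →ₗ[ℝ] S →ₗ[ℝ] ℝ) (b : S →ₗ[ℝ] M →ₗ[ℝ] ℝ)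
    (c : M →ₗ[ℝ] M →ₗ[ℝ] ℝ) (L : ℝ → M →ₗ[ℝ] ℝ)
    (α : ℝ) (hα : 0 < α) (hacoer : ∀ v : S, α * ‖v‖ ^ 2 ≤ a v v)
    (φm φp : ℝ) (hφm : 0 < φm)
    (hccoer : ∀ μ : M, φm * ‖μ‖ ^ 2 ≤ c μ μ)
    (hcbdd : ∀ μ : M, c μ μ ≤ φp * ‖μ‖ ^ 2)
    (hcsymm : ∀ η μ : M, c η μ = c μ η)
    (T : ℝ) (hT : 0 < T)
    (p q : ℝ → M) (p' q' : ℝ → M) (u v : ℝ → S)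
    (hp : ∀ t ∈ Set.Icc (0 : ℝ) T, HasDerivAt p (p' t) t)
    (hq : ∀ t ∈ Set.Icc (0 : ℝ) T, HasDerivAt q (q' t) t)
    (heq1 : ∀ t ∈ Set.Icc (0 : ℝ) T, ∀ w : S, a (u t) w - b w (p t) = 0)
    (heq2 : ∀ t ∈ Set.Icc (0 : ℝ) T, ∀ μ : M, c (p' t) μ + b (u t) μ = L t μ)
    (heq1' : ∀ t ∈ Set.Icc (0 : ℝ) T, ∀ w : S, a (v t) w - b w (q t) = 0)
    (heq2' : ∀ t ∈ Set.Icc (0 : ℝ) T, ∀ μ : M, c (q' t) μ + b (v t) μ = L t μ)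
    (hinit : p 0 = q 0) :
    ∀ t ∈ Set.Icc (0 : ℝ) T, p t = q t ∧ u t = v t := by
  -- nonnegativity of the quadratic form c
  have hcnn : ∀ μ : M, 0 ≤ c μ μ := fun μ =>
    le_trans (by positivity) (hccoer μ)
  -- Cauchy-Schwarz for c
  have hCS : ∀ x y : M, (c x y) ^ 2 ≤ c x x * c y y := by
    intro x y
    have hquad : ∀ s : ℝ, 0 ≤ (c y y) * (s * s) + (2 * c x y) * s + c x x := by
      intro s
      have h0 := hcnn (x + s • y)
      have : c (x + s • y) (x + s • y)
          = (c y y) * (s * s) + (2 * c x y) * s + c x x := by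
        simp only [map_add, map_smul, LinearMap.add_apply, LinearMap.smul_apply,
          smul_eq_mul]
        rw [hcsymm y x]; ring
      linarith [this ▸ h0]
    have hd := discrim_le_zero hquad
    rw [discrim] at hd
    nlinarith [hd]
    -- (2cxy)^2 - 4 cyy cxx ≤ 0
  set P : ℝ := max φp 0 with hP
  have hPnn : 0 ≤ P := le_max_right _ _
  have hbd : ∀ x : M, c x x ≤ P * ‖x‖ ^ 2 := fun x =>
    le_trans (hcbdd x) (by have := sq_nonneg ‖x‖; nlinarith [le_max_left φp (0:ℝ)])
  -- c is a bounded bilinear map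
  have hB : IsBoundedBilinearMap ℝ (fun z : M × M => c z.1 z.2) := by
    refine ⟨fun x₁ x₂ y => by simp [map_add], fun s x y => by simp [map_smul],
      fun x y₁ y₂ => by simp [map_add], fun s x y => by simp [map_smul],
      ⟨P + 1, by linarith, fun x y => ?_⟩⟩
    have h1 : (c x y) ^ 2 ≤ (P * ‖x‖ * ‖y‖) ^ 2 := by
      have := hCS x y
      have hx := hbd x
      have hy := hbd y
      nlinarith [hcnn x, hcnn y, norm_nonneg x, norm_nonneg y, sq_nonneg ‖x‖,
        sq_nonneg ‖y‖, mul_nonneg (mul_nonneg hPnn (norm_nonneg x)) (norm_nonneg y)]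
    have hK : 0 ≤ P * ‖x‖ * ‖y‖ :=
      mul_nonneg (mul_nonneg hPnn (norm_nonneg x)) (norm_nonneg y)
    have habs : |c x y| ≤ P * ‖x‖ * ‖y‖ := by
      nlinarith [abs_nonneg (c x y), sq_abs (c x y)]
    have : (P : ℝ) * ‖x‖ * ‖y‖ ≤ (P + 1) * ‖x‖ * ‖y‖ := by
      nlinarith [norm_nonneg x, norm_nonneg y, mul_nonneg (norm_nonneg x) (norm_nonneg y)]
    calc ‖c x y‖ = |c x y| := rfl
      _ ≤ P * ‖x‖ * ‖y‖ := habs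
      _ ≤ (P + 1) * ‖x‖ * ‖y‖ := this
  -- the energy
  set E : ℝ → ℝ := fun t => c (p t - q t) (p t - q t) with hE
  have hE' : ∀ t ∈ Set.Icc (0 : ℝ) T,
      HasDerivAt E (2 * c (p' t - q' t) (p t - q t)) t := by
    intro t ht
    have he : HasDerivAt (fun s => p s - q s) (p' t - q' t) t :=
      (hp t ht).sub (hq t ht)
    have hg : HasDerivAt (fun s => ((p s - q s, p s - q s) : M × M))
        (p' t - q' t, p' t - q' t) t := he.prodMk he
    have hd := (hB.hasFDerivAt (p t - q t, p t - q t)).comp_hasDerivAt t hg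
    have : hB.deriv (p t - q t, p t - q t) (p' t - q' t, p' t - q' t)
        = 2 * c (p' t - q' t) (p t - q t) := by
      rw [hB.deriv_apply]
      simp only []
      rw [hcsymm (p t - q t) (p' t - q' t)]
      ring
    rw [this] at hd
    exact hd
  -- the derivative of E is nonpositive on Icc
  have hE'le : ∀ t ∈ Set.Icc (0 : ℝ) T, 2 * c (p' t - q' t) (p t - q t) ≤ 0 := by
    intro t ht
    set w : S := u t - v t with hw
    set e : M := p t - q t with he
    have h2 : c (p' t - q' t) e + b w e = 0 := by
      have h := heq2 t ht e
      have h' := heq2' t ht e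
      simp only [hw, map_sub, LinearMap.sub_apply]
      linarith
    have h1 : a w w = b w e := by
      have h := heq1 t ht w
      have h' := heq1' t ht w
      simp only [hw, he, map_sub, LinearMap.sub_apply] at *
      linarith
    have hcoer := hacoer w
    have : c (p' t - q' t) e = -(a w w) := by linarith
    have hnn : 0 ≤ a w w := le_trans (by positivity) hcoer
    rw [this] at *
    linarith [this]
  -- E is antitone on Icc
  have hanti : AntitoneOn E (Set.Icc 0 T) := by
    apply antitoneOn_of_deriv_nonpos (convex_Icc 0 T)
    · exact fun t ht => ((hE' t ht).continuousAt).continuousWithinAt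
    · intro t ht
      rw [interior_Icc] at ht
      exact ((hE' t (Set.mem_Icc_of_Ioo ht)).differentiableAt).differentiableWithinAt
    · intro t ht
      rw [interior_Icc] at ht
      have ht' : t ∈ Set.Icc (0 : ℝ) T := Set.mem_Icc_of_Ioo ht
      rw [(hE' t ht').deriv]
      exact hE'le t ht'
  have hE0 : E 0 = 0 := by
    simp [hE, hinit]
  -- conclude p = q
  have hpq : ∀ t ∈ Set.Icc (0 : ℝ) T, p t = q t := by
    intro t ht
    have h0mem : (0 : ℝ) ∈ Set.Icc (0 : ℝ) T := ⟨le_refl 0, le_of_lt hT⟩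
    have hle : E t ≤ E 0 := hanti h0mem ht ht.1
    rw [hE0] at hle
    have hlow := hccoer (p t - q t)
    have hnorm : ‖p t - q t‖ ^ 2 ≤ 0 := by
      by_contra h
      push_neg at h
      nlinarith
    have : ‖p t - q t‖ = 0 := by nlinarith [sq_nonneg ‖p t - q t‖, norm_nonneg (p t - q t)]
    have := norm_eq_zero.mp this
    exact sub_eq_zero.mp this
  -- conclude u = v
  intro t ht
  refine ⟨hpq t ht, ?_⟩
  set w : S := u t - v t with hw
  have h1 : a w w = b w (p t - q t) := by
    have h := heq1 t ht w
    have h' := heq1' t ht w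
    simp only [hw, map_sub, LinearMap.sub_apply] at *
    linarith
  rw [hpq t ht] at h1
  simp only [sub_self, map_zero] at h1
  have hcoer := hacoer w
  have hnorm : ‖w‖ ^ 2 ≤ 0 := by nlinarith
  have : ‖w‖ = 0 := by nlinarith [sq_nonneg ‖w‖, norm_nonneg w]
  exact sub_eq_zero.mp (norm_eq_zero.mp this)
end

section
/- (GTF-Schur fixed-point equivalence.) Define the GTF-Schur map T(φ) = Σᵢ 𝒮ᵢ^DtN(Ŝ_γ(φ, q_γ, p_{0,γ}), q_i, p_{0,i}), where Ŝ_γ(φ, q_γ, p_{0,γ}) = p_γ solves the fracture problem with source q_γ + φ. Then φ is a fixed point of T (i.e., solves the interface problem (I − S_ℱ)(φ) = χ_ℱ with S_ℱ(φ) = Σᵢ 𝒮ᵢ^DtN(Ŝ_γ(φ,0,0),0,0) and χ_ℱ = Σᵢ 𝒮ᵢ^DtN(Ŝ_γ(0, q_γ, p_{0,γ}), q_i, p_{0,i})) if and only if the resulting triple (p_1, p_2, p_γ) with p_i|_γ = p_γ and u_γ, u_i satisfies both transmission conditions (pressure continuity and fracture flux balance) of the reduced fracture model. -/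
/-- GTF-Schur fixed-point equivalence, stated abstractly.  `Ŝ_γ = Shat` is the
fracture solution operator (`FracProb g p` ⇔ "`p` solves the fracture problem
with flux source `g`", uniquely solvable in `p`, and the source is determined
by the solution, `hFuniqG`); `sol i λ` is the unique solution of subdomain
problem `i` with Dirichlet data `λ` (`SubProb`), `flux i` its normal trace.
The GTF map is `T(φ) = Σᵢ 𝒮ᵢ^DtN(Ŝ_γ φ) = flux 0 (sol 0 (Shat φ)) +
flux 1 (sol 1 (Shat φ))`, which by linearity splits as `T(φ) = S_ℱ(φ) + χ_ℱ`
(`hsplit`).  Claim: `φ` solves `(I − S_ℱ)(φ) = χ_ℱ` iff the resulting triple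
(with `p_i|_γ = p_γ = Shat φ` by construction) satisfies both transmission
conditions of the reduced fracture model: the pressure continuity (the
subdomain problems with Dirichlet data `Shat φ`) and the fracture flux
balance (the fracture equation with the actual total subdomain flux). -/
theorem stmt15 {Λ W : Type*} [AddCommGroup Λ]
    (SubProb : Fin 2 → Λ → W → Prop)
    (flux : Fin 2 → W → Λ)
    (sol : Fin 2 → Λ → W)
    (hsol : ∀ i lam, SubProb i lam (sol i lam))
    (huniq : ∀ i lam w, SubProb i lam w → w = sol i lam)
    (FracProb : Λ → Λ → Prop)
    (Shat : Λ → Λ)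
    (hShat : ∀ φ, FracProb φ (Shat φ))
    (hFuniqP : ∀ g p, FracProb g p → p = Shat g)
    (hFuniqG : ∀ g g' p, FracProb g p → FracProb g' p → g = g')
    (SF : Λ → Λ) (χF : Λ)
    (hsplit : ∀ φ : Λ, flux 0 (sol 0 (Shat φ)) + flux 1 (sol 1 (Shat φ)) = SF φ + χF) :
    ∀ φ : Λ,
      (φ - SF φ = χF) ↔
        ((∀ i : Fin 2, SubProb i (Shat φ) (sol i (Shat φ))) ∧
          FracProb (flux 0 (sol 0 (Shat φ)) + flux 1 (sol 1 (Shat φ))) (Shat φ)) := by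
  intro φ
  constructor
  · intro h
    refine ⟨fun i => hsol i _, ?_⟩
    have : flux 0 (sol 0 (Shat φ)) + flux 1 (sol 1 (Shat φ)) = φ := by
      rw [hsplit φ, ← h]; abel
    rw [this]; exact hShat φ
  · rintro ⟨-, h2⟩
    have := hFuniqG _ _ _ h2 (hShat φ)
    rw [hsplit φ] at this
    exact (eq_sub_of_add_eq' this).symm
end
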